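/- Fix ξ ∈ ℝ³ with ε ≤ |ξ| for some ε > 0, θ ∈ [0,1], and b² > a² > 0. Let û solve û'' + a²|ξ|²û + (b²−a²)(ξ·û)ξ + |ξ|^{2θ}û' = 0 with energy E(t) = |û'(t)|² + a²|ξ|²|û(t)|² + (b²−a²)|ξ·û(t)|². Then there exists a constant c > 0, depending only on ε, a, b, θ, such that E(t) ≤ 3 e^{−ct} E(0) for all t ≥ 0. -/

import Mathlib

/-!
Write `u'' + A u + δ u' = 0` with `A = a²|ξ|² I + (b² - a²) ξ ξᵀ`, a symmetric operator on `ℂ³`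
(viewed as a real Hilbert space) with `⟪A v, v⟫ ≥ m ‖v‖²`, `m = a²|ξ|²`, and `δ = |ξ|^{2θ}`.
The energy `E = ‖u'‖² + ⟪A u, u⟫` is only dissipated through `u'`, so one perturbs it to
`L = E + α ⟪u', u⟫`. For `α = min δ (m / δ)`, Cauchy–Schwarz gives `E / 2 ≤ L ≤ 3 E / 2` and
`L' ≤ -(α / 3) L`, hence `E(t) ≤ 2 L(t) ≤ 2 e^{-αt/3} L(0) ≤ 3 e^{-αt/3} E(0)` by Grönwall.
Since `|ξ| ≥ ε` and `θ ∈ [0, 1]`, both `δ = |ξ|^{2θ}` and `m / δ = a² |ξ|^{2(1-θ)}` are bounded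
below by `min 1 a² · min 1 ε²`.
-/

open Set Real
open scoped RealInnerProductSpace InnerProductSpace

lemma two_mul_abs_le_add_of_sq_le_mul {g p q : ℝ} (hp : 0 ≤ p) (hq : 0 ≤ q) (h : g ^ 2 ≤ p * q) :
    2 * |g| ≤ p + q := by
  nlinarith [sq_abs g, abs_nonneg g, sq_nonneg (p - q)]

lemma le_exp_neg_mul_of_hasDerivWithinAt_le {F F' : ℝ → ℝ} {κ : ℝ}
    (hF : ∀ t ∈ Ici (0 : ℝ), HasDerivWithinAt F (F' t) (Ici 0) t)
    (hF' : ∀ t ∈ Ici (0 : ℝ), F' t ≤ -κ * F t) {t : ℝ} (ht : 0 ≤ t) :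
    F t ≤ exp (-(κ * t)) * F 0 := by
  have hderiv : ∀ s ∈ Ici (0 : ℝ), HasDerivWithinAt (fun s => exp (κ * s) * F s)
      (exp (κ * s) * (κ * F s + F' s)) (Ici 0) s := fun s hs => by
    have hexp : HasDerivAt (fun s => exp (κ * s)) (exp (κ * s) * κ) s := by
      simpa using ((hasDerivAt_id s).const_mul κ).exp
    exact (hexp.hasDerivWithinAt.fun_mul (hF s hs)).congr_deriv (by ring)
  have hanti : AntitoneOn (fun s => exp (κ * s) * F s) (Ici 0) := by
    refine antitoneOn_of_hasDerivWithinAt_nonpos (f' := fun s => exp (κ * s) * (κ * F s + F' s))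
      (convex_Ici 0) (fun s hs => (hderiv s hs).continuousWithinAt) (fun s hs => ?_)
      (fun s hs => ?_)
    · rw [interior_Ici] at hs ⊢
      exact (hderiv s (Ioi_subset_Ici_self hs)).mono Ioi_subset_Ici_self
    · rw [interior_Ici] at hs
      exact mul_nonpos_of_nonneg_of_nonpos (exp_nonneg _)
        (by linarith [hF' s (Ioi_subset_Ici_self hs)])
  have h := hanti self_mem_Ici ht ht
  simp only [mul_zero, exp_zero, one_mul] at h
  calc F t = exp (-(κ * t)) * (exp (κ * t) * F t) := by
        rw [← mul_assoc, ← exp_add, neg_add_cancel, exp_zero, one_mul]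
    _ ≤ exp (-(κ * t)) * F 0 := by gcongr

lemma real_inner_sq_le_norm_sq_mul_norm_sq {H : Type*} [NormedAddCommGroup H]
    [InnerProductSpace ℝ H] (v w : H) : ⟪w, v⟫ ^ 2 ≤ ‖w‖ ^ 2 * ‖v‖ ^ 2 := by
  rw [sq, ← real_inner_self_eq_norm_sq, ← real_inner_self_eq_norm_sq]
  exact real_inner_mul_inner_self_le w v

lemma min_one_le_rpow {ε ρ s : ℝ} (hε : 0 < ε) (hρ : ε ^ 2 ≤ ρ) (hs : s ∈ Icc (0 : ℝ) 1) :
    min 1 (ε ^ 2) ≤ ρ ^ s := by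
  have hρ0 : 0 < ρ := (pow_pos hε 2).trans_le hρ
  rcases le_total 1 ρ with h | h
  · exact (min_le_left _ _).trans (one_le_rpow h hs.1)
  · calc min 1 (ε ^ 2) ≤ ρ := (min_le_right _ _).trans hρ
      _ = ρ ^ (1 : ℝ) := (rpow_one ρ).symm
      _ ≤ ρ ^ s := rpow_le_rpow_of_exponent_ge hρ0 h hs.2

lemma min_mul_min_le_min_rpow {c ε ρ θ : ℝ} (hc : 0 ≤ c) (hε : 0 < ε) (hρ : ε ^ 2 ≤ ρ)
    (hθ : θ ∈ Icc (0 : ℝ) 1) :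
    min 1 c * min 1 (ε ^ 2) ≤ min (ρ ^ θ) (c * ρ / ρ ^ θ) := by
  have hρ0 : 0 < ρ := (pow_pos hε 2).trans_le hρ
  have hdiv : c * ρ / ρ ^ θ = c * ρ ^ (1 - θ) := by
    rw [rpow_sub hρ0, rpow_one, mul_div_assoc]
  rw [hdiv]
  refine le_min ?_ ?_
  · calc min 1 c * min 1 (ε ^ 2) ≤ 1 * ρ ^ θ :=
        mul_le_mul (min_le_left _ _) (min_one_le_rpow hε hρ hθ) (by positivity) zero_le_one
      _ = ρ ^ θ := one_mul _
  · exact mul_le_mul (min_le_right _ _)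
      (min_one_le_rpow hε hρ ⟨by linarith [hθ.2], by linarith [hθ.1]⟩) (by positivity) hc

namespace DampedWave

variable {H : Type*} [NormedAddCommGroup H] [InnerProductSpace ℝ H]

def energy (A : H →L[ℝ] H) (v w : H) : ℝ := ‖w‖ ^ 2 + ⟪A v, v⟫

def lyapunov (A : H →L[ℝ] H) (α : ℝ) (v w : H) : ℝ := energy A v w + α * ⟪w, v⟫

variable {A : H →L[ℝ] H} {m : ℝ}

lemma energy_nonneg (hm : 0 ≤ m) (hA : ∀ v, m * ‖v‖ ^ 2 ≤ ⟪A v, v⟫) (v w : H) :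
    0 ≤ energy A v w := by
  unfold energy
  nlinarith [hA v, sq_nonneg ‖v‖, sq_nonneg ‖w‖]

lemma abs_lyapunov_sub_energy_le (hA : ∀ v, m * ‖v‖ ^ 2 ≤ ⟪A v, v⟫) {α : ℝ} (hα : α ^ 2 ≤ m)
    (v w : H) : |lyapunov A α v w - energy A v w| ≤ energy A v w / 2 := by
  have hcs : (α * ⟪w, v⟫) ^ 2 ≤ ‖w‖ ^ 2 * (m * ‖v‖ ^ 2) := calc
    (α * ⟪w, v⟫) ^ 2 = α ^ 2 * ⟪w, v⟫ ^ 2 := mul_pow _ _ _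
    _ ≤ m * (‖w‖ ^ 2 * ‖v‖ ^ 2) :=
      mul_le_mul hα (real_inner_sq_le_norm_sq_mul_norm_sq v w) (sq_nonneg _)
        ((sq_nonneg α).trans hα)
    _ = ‖w‖ ^ 2 * (m * ‖v‖ ^ 2) := by ring
  have h := two_mul_abs_le_add_of_sq_le_mul (sq_nonneg _)
    (mul_nonneg ((sq_nonneg α).trans hα) (sq_nonneg _)) hcs
  simp only [lyapunov, energy, add_sub_cancel_left] at h ⊢
  linarith [hA v]

lemma hasDerivWithinAt_lyapunov (hA : (A : H →ₗ[ℝ] H).IsSymmetric) {α δ : ℝ} {u u' u'' : ℝ → H}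
    {s : Set ℝ} {t : ℝ} (hu : HasDerivWithinAt u (u' t) s t)
    (hu' : HasDerivWithinAt u' (u'' t) s t) (hwave : u'' t + A (u t) + δ • u' t = 0) :
    HasDerivWithinAt (fun τ => lyapunov A α (u τ) (u' τ))
      ((α - 2 * δ) * ‖u' t‖ ^ 2 - α * ⟪A (u t), u t⟫ - α * δ * ⟪u' t, u t⟫) s t := by
  have hAu : HasDerivWithinAt (fun τ => A (u τ)) (A (u' t)) s t :=
    A.hasFDerivAt.comp_hasDerivWithinAt t hu
  have h := (hu'.norm_sq.add (hAu.inner ℝ hu)).add ((hu'.inner ℝ hu).const_mul α)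
  refine h.congr_deriv ?_
  have hu'' : u'' t = -A (u t) - δ • u' t := by
    rw [← sub_eq_zero, ← hwave]; abel
  have hsym : ⟪A (u' t), u t⟫ = ⟪u' t, A (u t)⟫ := hA _ _
  simp only [hu'', hsym, inner_sub_left, inner_sub_right, inner_neg_left, inner_neg_right,
    real_inner_smul_left, real_inner_smul_right, real_inner_self_eq_norm_sq]
  rw [real_inner_comm (u t) (u' t), real_inner_comm (A (u t)) (u' t)]
  ring

lemma lyapunov_deriv_le (hA : ∀ v, m * ‖v‖ ^ 2 ≤ ⟪A v, v⟫) {α δ : ℝ} (hα : 0 ≤ α) (hαδ : α ≤ δ)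
    (hαm : α * δ ≤ m) (v w : H) :
    (α - 2 * δ) * ‖w‖ ^ 2 - α * ⟪A v, v⟫ - α * δ * ⟪w, v⟫ ≤ -(α / 3) * lyapunov A α v w := by
  have hδ : 0 ≤ δ := hα.trans hαδ
  have hm : 0 ≤ m := (mul_nonneg hα hδ).trans hαm
  -- AM–GM absorbs the cross term into the dissipation; this is where `α δ ≤ m` is needed.
  have hcs : (α * δ * ⟪w, v⟫) ^ 2 ≤ (δ * ‖w‖ ^ 2) * (α * m * ‖v‖ ^ 2) := calc
    (α * δ * ⟪w, v⟫) ^ 2 = (α * δ) * (α * δ) * ⟪w, v⟫ ^ 2 := by ring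
    _ ≤ (α * δ) * m * (‖w‖ ^ 2 * ‖v‖ ^ 2) := by
      gcongr
      exact real_inner_sq_le_norm_sq_mul_norm_sq v w
    _ = (δ * ‖w‖ ^ 2) * (α * m * ‖v‖ ^ 2) := by ring
  have h := two_mul_abs_le_add_of_sq_le_mul (by positivity) (by positivity) hcs
  have hAv := mul_le_mul_of_nonneg_left (hA v) hα
  rw [abs_mul, abs_of_nonneg (mul_nonneg hα hδ)] at h
  have hG : (α ^ 2 / 3 - α * δ) * ⟪w, v⟫ ≤ α * δ * |⟪w, v⟫| := by
    have hc : 0 ≤ α * δ - α ^ 2 / 3 := by nlinarith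
    have hsum : 0 ≤ |⟪w, v⟫| + ⟪w, v⟫ := by linarith [neg_abs_le ⟪w, v⟫]
    nlinarith [mul_nonneg hc hsum, mul_nonneg (sq_nonneg α) (abs_nonneg ⟪w, v⟫)]
  simp only [lyapunov, energy]
  nlinarith [mul_nonneg (sub_nonneg.2 hαδ) (sq_nonneg ‖w‖), mul_nonneg hδ (sq_nonneg ‖w‖),
    mul_nonneg hα (mul_nonneg hm (sq_nonneg ‖v‖))]

theorem energy_le_three_mul_exp (hA : (A : H →ₗ[ℝ] H).IsSymmetric)
    (hcoer : ∀ v, m * ‖v‖ ^ 2 ≤ ⟪A v, v⟫) (hm : 0 < m) {δ : ℝ} (hδ : 0 < δ) {u u' u'' : ℝ → H}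
    (hu : ∀ t ∈ Ici (0 : ℝ), HasDerivWithinAt u (u' t) (Ici 0) t)
    (hu' : ∀ t ∈ Ici (0 : ℝ), HasDerivWithinAt u' (u'' t) (Ici 0) t)
    (hwave : ∀ t ∈ Ici (0 : ℝ), u'' t + A (u t) + δ • u' t = 0) {t : ℝ} (ht : 0 ≤ t) :
    energy A (u t) (u' t) ≤ 3 * exp (-(min δ (m / δ) / 3 * t)) * energy A (u 0) (u' 0) := by
  -- the largest weight with `α ≤ δ` and `α δ ≤ m`
  set α := min δ (m / δ)
  have hα : 0 < α := lt_min hδ (div_pos hm hδ)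
  have hαδ : α ≤ δ := min_le_left _ _
  have hαm : α * δ ≤ m := (le_div_iff₀ hδ).1 (min_le_right _ _)
  have hα2 : α ^ 2 ≤ m := by nlinarith
  have hL := le_exp_neg_mul_of_hasDerivWithinAt_le (F := fun s => lyapunov A α (u s) (u' s))
    (fun s hs => hasDerivWithinAt_lyapunov hA (hu s hs) (hu' s hs) (hwave s hs))
    (fun s _ => lyapunov_deriv_le hcoer hα.le hαδ hαm _ _) ht
  have hEt := abs_le.1 (abs_lyapunov_sub_energy_le hcoer hα2 (u t) (u' t))
  have hE0 := abs_le.1 (abs_lyapunov_sub_energy_le hcoer hα2 (u 0) (u' 0))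
  calc energy A (u t) (u' t) ≤ 2 * lyapunov A α (u t) (u' t) := by linarith
    _ ≤ 2 * (exp (-(α / 3 * t)) * lyapunov A α (u 0) (u' 0)) := by gcongr
    _ ≤ 2 * (exp (-(α / 3 * t)) * (3 / 2 * energy A (u 0) (u' 0))) := by gcongr; linarith
    _ = 3 * exp (-(α / 3 * t)) * energy A (u 0) (u' 0) := by ring

end DampedWave

section LameSymbol

variable {ι : Type*} [Fintype ι]

lemma EuclideanSpace.real_inner_eq_re_inner (v w : EuclideanSpace ℂ ι) :
    ⟪v, w⟫_ℝ = (⟪v, w⟫_ℂ).re := by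
  simp [PiLp.inner_apply, Complex.re_sum]

noncomputable def lameSymbol (m k : ℝ) (ξ : EuclideanSpace ℂ ι) :
    EuclideanSpace ℂ ι →L[ℝ] EuclideanSpace ℂ ι :=
  m • ContinuousLinearMap.id ℝ _ + k • (InnerProductSpace.rankOne ℂ ξ ξ).restrictScalars ℝ

lemma lameSymbol_apply (m k : ℝ) (ξ v : EuclideanSpace ℂ ι) :
    lameSymbol m k ξ v = m • v + k • ⟪ξ, v⟫_ℂ • ξ := rfl

lemma isSymmetric_lameSymbol (m k : ℝ) (ξ : EuclideanSpace ℂ ι) :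
    (lameSymbol m k ξ : EuclideanSpace ℂ ι →ₗ[ℝ] EuclideanSpace ℂ ι).IsSymmetric := by
  intro v w
  have h := InnerProductSpace.isSymmetric_rankOne_self (𝕜 := ℂ) ξ v w
  simp only [ContinuousLinearMap.coe_coe, InnerProductSpace.rankOne_apply] at h
  simp only [ContinuousLinearMap.coe_coe, lameSymbol_apply, inner_add_left, inner_add_right,
    real_inner_smul_left, real_inner_smul_right, EuclideanSpace.real_inner_eq_re_inner _ (_ • ξ),
    EuclideanSpace.real_inner_eq_re_inner (_ • ξ), h]

lemma inner_lameSymbol_self (m k : ℝ) (ξ v : EuclideanSpace ℂ ι) :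
    ⟪lameSymbol m k ξ v, v⟫_ℝ = m * ‖v‖ ^ 2 + k * ‖⟪ξ, v⟫_ℂ‖ ^ 2 := by
  rw [lameSymbol_apply, inner_add_left, real_inner_smul_left, real_inner_smul_left,
    real_inner_self_eq_norm_sq, EuclideanSpace.real_inner_eq_re_inner, inner_smul_left,
    Complex.conj_mul']
  norm_cast

lemma lameSymbol_coercive {m k : ℝ} (hk : 0 ≤ k) (ξ v : EuclideanSpace ℂ ι) :
    m * ‖v‖ ^ 2 ≤ ⟪lameSymbol m k ξ v, v⟫_ℝ := by
  rw [inner_lameSymbol_self]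
  exact le_add_of_nonneg_right (mul_nonneg hk (sq_nonneg _))

lemma hasDerivWithinAt_toLp {f : ℝ → ι → ℂ} {f' : ι → ℂ} {s : Set ℝ} {t : ℝ}
    (h : ∀ i, HasDerivWithinAt (fun x => f x i) (f' i) s t) :
    HasDerivWithinAt (fun x => WithLp.toLp 2 (f x) : ℝ → EuclideanSpace ℂ ι)
      (WithLp.toLp 2 f') s t :=
  (PiLp.continuousLinearEquiv 2 ℝ (fun _ : ι => ℂ)).symm.hasFDerivAt.comp_hasDerivWithinAt t
    (hasDerivWithinAt_pi.2 h)

lemma inner_toLp_ofReal (ξ : ι → ℝ) (v : ι → ℂ) :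
    ⟪(WithLp.toLp 2 fun j => (ξ j : ℂ) : EuclideanSpace ℂ ι), WithLp.toLp 2 v⟫_ℂ
      = ∑ j, (ξ j : ℂ) * v j := by
  simp [EuclideanSpace.inner_toLp_toLp, dotProduct, mul_comm]

end LameSymbol

theorem stmt7 (a b θ ε : ℝ) (ha : 0 < a ^ 2) (hab : a ^ 2 < b ^ 2)
    (hθ : θ ∈ Icc (0 : ℝ) 1) (hε : 0 < ε) :
    ∃ c > (0 : ℝ), ∀ (ξ : Fin 3 → ℝ), ε ≤ Real.sqrt (∑ j, ξ j ^ 2) →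
      ∀ (u u' u'' : ℝ → Fin 3 → ℂ),
      (∀ t ∈ Ici (0 : ℝ), ∀ i, HasDerivWithinAt (fun s => u s i) (u' t i) (Ici 0) t) →
      (∀ t ∈ Ici (0 : ℝ), ∀ i, HasDerivWithinAt (fun s => u' s i) (u'' t i) (Ici 0) t) →
      (∀ t ∈ Ici (0 : ℝ), ∀ i,
        u'' t i + ((a ^ 2 * ∑ j, ξ j ^ 2 : ℝ) : ℂ) * u t i
          + ((b ^ 2 - a ^ 2 : ℝ) : ℂ) * (∑ j, (ξ j : ℂ) * u t j) * (ξ i : ℂ)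
          + ((Real.sqrt (∑ j, ξ j ^ 2) ^ (2 * θ) : ℝ) : ℂ) * u' t i = 0) →
      let E : ℝ → ℝ := fun s =>
        (∑ i, ‖u' s i‖ ^ 2) + a ^ 2 * (∑ j, ξ j ^ 2) * ∑ i, ‖u s i‖ ^ 2
          + (b ^ 2 - a ^ 2) * ‖∑ j, (ξ j : ℂ) * u s j‖ ^ 2
      ∀ t : ℝ, 0 ≤ t → E t ≤ 3 * Real.exp (-(c * t)) * E 0 := by
  refine ⟨min 1 (a ^ 2) * min 1 (ε ^ 2) / 3, by positivity, ?_⟩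
  intro ξ hξ u u' u'' hu hu' hwave E t ht
  set ρ := ∑ j, ξ j ^ 2
  have hρ0 : 0 ≤ ρ := by positivity
  have hρ : ε ^ 2 ≤ ρ := by simpa [sq_sqrt hρ0] using pow_le_pow_left₀ hε.le hξ 2
  have hρpos : 0 < ρ := (pow_pos hε 2).trans_le hρ
  have hδ : sqrt ρ ^ (2 * θ) = ρ ^ θ := by
    rw [sqrt_eq_rpow, ← rpow_mul hρ0]; ring_nf
  rw [hδ] at hwave
  set A := lameSymbol (a ^ 2 * ρ) (b ^ 2 - a ^ 2) (WithLp.toLp 2 fun j => (ξ j : ℂ)) with hA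
  have hcoer : ∀ v, a ^ 2 * ρ * ‖v‖ ^ 2 ≤ ⟪A v, v⟫_ℝ := lameSymbol_coercive (by linarith) _
  have hE : ∀ s, E s = DampedWave.energy A (WithLp.toLp 2 (u s)) (WithLp.toLp 2 (u' s)) := by
    intro s
    simp only [E, DampedWave.energy, hA, inner_lameSymbol_self, EuclideanSpace.norm_sq_eq,
      inner_toLp_ofReal]
    ring
  have hwaveE : ∀ s ∈ Ici (0 : ℝ), WithLp.toLp 2 (u'' s) + A (WithLp.toLp 2 (u s))
      + ρ ^ θ • WithLp.toLp 2 (u' s) = 0 := fun s hs => by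
    ext i
    simp only [hA, lameSymbol_apply, inner_toLp_ofReal, PiLp.add_apply, PiLp.smul_apply,
      Complex.real_smul, PiLp.zero_apply, smul_eq_mul]
    linear_combination hwave s hs i
  have hdecay := DampedWave.energy_le_three_mul_exp (isSymmetric_lameSymbol _ _ _) hcoer
    (mul_pos ha hρpos) (rpow_pos_of_pos hρpos θ) (fun s hs => hasDerivWithinAt_toLp (hu s hs))
    (fun s hs => hasDerivWithinAt_toLp (hu' s hs)) hwaveE ht
  rw [hE, hE]
  refine hdecay.trans ?_
  gcongr
  · exact DampedWave.energy_nonneg (mul_pos ha hρpos).le hcoer _ _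
  · exact min_mul_min_le_min_rpow ha.le hε hρ hθ
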